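/- arXiv:1508.03234 — 2 statements merged into one kernel-verified Lean document; each statement's English description precedes it below -/
import Mathlib

section
/- Let X ⊆ ℝ^n be closed, p ∈ ℝ^n with dist(p, X) = R, and let u be the unique nonnegative uniformly continuous viscosity solution of the k-dimensional level set equation ∂u/∂t = F(∇u, ∇²u) with initial data u(·,0) = dist(·, X). If R² > 2kt, then u(p,t) ≥ R − √(2kt). -/
open Metric Set
open scoped RealInnerProductSpace

noncomputable def ambrosioSonerF {n : ℕ} (k : ℕ) (p : EuclideanSpace ℝ (Fin n))
    (A : EuclideanSpace ℝ (Fin n) → EuclideanSpace ℝ (Fin n) → ℝ) : ℝ :=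
  sInf {t : ℝ | ∃ b : Fin k → EuclideanSpace ℝ (Fin n),
    Orthonormal ℝ b ∧ (∀ i, ⟪b i, p⟫ = 0) ∧ t = ∑ i, A (b i) (b i)}

noncomputable def ambrosioSonerFup {n : ℕ} (k : ℕ)
    (A : EuclideanSpace ℝ (Fin n) → EuclideanSpace ℝ (Fin n) → ℝ) : ℝ :=
  sSup {t : ℝ | ∃ p : EuclideanSpace ℝ (Fin n), p ≠ 0 ∧ t = ambrosioSonerF k p A}

noncomputable def ambrosioSonerFlo {n : ℕ} (k : ℕ)
    (A : EuclideanSpace ℝ (Fin n) → EuclideanSpace ℝ (Fin n) → ℝ) : ℝ :=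
  sInf {t : ℝ | ∃ p : EuclideanSpace ℝ (Fin n), p ≠ 0 ∧ t = ambrosioSonerF k p A}

noncomputable def spatialGrad {n : ℕ} (φ : EuclideanSpace ℝ (Fin n) × ℝ → ℝ)
    (z : EuclideanSpace ℝ (Fin n) × ℝ) : EuclideanSpace ℝ (Fin n) :=
  gradient (fun x => φ (x, z.2)) z.1

noncomputable def spatialHess {n : ℕ} (φ : EuclideanSpace ℝ (Fin n) × ℝ → ℝ)
    (z : EuclideanSpace ℝ (Fin n) × ℝ) :
    EuclideanSpace ℝ (Fin n) → EuclideanSpace ℝ (Fin n) → ℝ :=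
  fun v w => iteratedFDeriv ℝ 2 (fun x => φ (x, z.2)) z.1 ![v, w]

noncomputable def timeDeriv {n : ℕ} (φ : EuclideanSpace ℝ (Fin n) × ℝ → ℝ)
    (z : EuclideanSpace ℝ (Fin n) × ℝ) : ℝ :=
  deriv (fun t => φ (z.1, t)) z.2

def IsViscositySubsolution {n : ℕ} (k : ℕ) (u : EuclideanSpace ℝ (Fin n) × ℝ → ℝ)
    (Ω : Set (EuclideanSpace ℝ (Fin n) × ℝ)) : Prop :=
  ∀ φ : EuclideanSpace ℝ (Fin n) × ℝ → ℝ, ContDiff ℝ 2 φ →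
    ∀ z ∈ Ω, IsLocalMaxOn (fun w => u w - φ w) Ω z →
      (spatialGrad φ z ≠ 0 →
        timeDeriv φ z ≤ ambrosioSonerF k (spatialGrad φ z) (spatialHess φ z)) ∧
      (spatialGrad φ z = 0 → timeDeriv φ z ≤ ambrosioSonerFup k (spatialHess φ z))

def IsViscositySupersolution {n : ℕ} (k : ℕ) (u : EuclideanSpace ℝ (Fin n) × ℝ → ℝ)
    (Ω : Set (EuclideanSpace ℝ (Fin n) × ℝ)) : Prop :=
  ∀ φ : EuclideanSpace ℝ (Fin n) × ℝ → ℝ, ContDiff ℝ 2 φ →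
    ∀ z ∈ Ω, IsLocalMinOn (fun w => u w - φ w) Ω z →
      (spatialGrad φ z ≠ 0 →
        timeDeriv φ z ≥ ambrosioSonerF k (spatialGrad φ z) (spatialHess φ z)) ∧
      (spatialGrad φ z = 0 → timeDeriv φ z ≥ ambrosioSonerFlo k (spatialHess φ z))

def IsViscositySolution {n : ℕ} (k : ℕ) (u : EuclideanSpace ℝ (Fin n) × ℝ → ℝ)
    (Ω : Set (EuclideanSpace ℝ (Fin n) × ℝ)) : Prop :=
  IsViscositySubsolution k u Ω ∧ IsViscositySupersolution k u Ω

/-! ### Auxiliary lemmas -/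

section Aux
variable {n : ℕ}
local notation "E" => EuclideanSpace ℝ (Fin n)

/-- The time-smoothing function used in the barrier. -/
noncomputable def lsfM (k : ℕ) (η b a ε : ℝ) (s : ℝ) : ℝ :=
  (k:ℝ)*(1+η)*(s + b + Real.sqrt ((s+b)^2 + a^2)) + ε^2

lemma lsfM_ge (k : ℕ) {η b a ε : ℝ} (hη : 0 ≤ η) (s : ℝ) :
    ε^2 ≤ lsfM k η b a ε s := by
  unfold lsfM
  have h1 : |s+b| ≤ Real.sqrt ((s+b)^2 + a^2) := by
    rw [← Real.sqrt_sq_eq_abs]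
    exact Real.sqrt_le_sqrt (by nlinarith [sq_nonneg a])
  have h2 : (0:ℝ) ≤ s + b + Real.sqrt ((s+b)^2 + a^2) := by
    have := neg_abs_le (s+b); linarith
  have h3 : (0:ℝ) ≤ (k:ℝ)*(1+η) := by positivity
  nlinarith [mul_nonneg h3 h2]

lemma lsfM_contDiff (k : ℕ) {η b a ε : ℝ} (ha : 0 < a) :
    ContDiff ℝ 2 (lsfM k η b a ε) := by
  unfold lsfM
  have h1 : ContDiff ℝ 2 (fun s : ℝ => (s+b)^2 + a^2) := by fun_prop
  have h2 : ContDiff ℝ 2 (fun s : ℝ => Real.sqrt ((s+b)^2 + a^2)) :=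
    h1.sqrt (fun s => by positivity)
  fun_prop

lemma lsfM_hasDerivAt (k : ℕ) {η b a ε : ℝ} (ha : 0 < a) (s : ℝ) :
    HasDerivAt (lsfM k η b a ε)
      ((k:ℝ)*(1+η)*(1 + (s+b)/Real.sqrt ((s+b)^2 + a^2))) s := by
  have hpos : (0:ℝ) < (s+b)^2 + a^2 := by positivity
  have h1 : HasDerivAt (fun x : ℝ => (x+b)^2 + a^2) (2*(s+b)) s := by
    have := ((hasDerivAt_id s).add_const b).pow 2
    simpa [mul_comm] using this.add_const (a^2)
  have h2 : HasDerivAt (fun x : ℝ => Real.sqrt ((x+b)^2 + a^2))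
      ((2*(s+b)) / (2 * Real.sqrt ((s+b)^2 + a^2))) s := h1.sqrt (ne_of_gt hpos)
  have h3 : HasDerivAt (fun x : ℝ => x + b + Real.sqrt ((x+b)^2 + a^2))
      (1 + (2*(s+b)) / (2 * Real.sqrt ((s+b)^2 + a^2))) s :=
    ((hasDerivAt_id s).add_const b).add h2
  have h4 := (h3.const_mul ((k:ℝ)*(1+η))).add_const (ε^2)
  have hs : Real.sqrt ((s+b)^2 + a^2) ≠ 0 := by positivity
  refine h4.congr_deriv ?_
  field_simp

lemma lsfM_deriv_ge (k : ℕ) {η b a : ℝ} (ha : 0 < a) (hb : 0 < b)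
    (hη : 0 < η) (hη1 : η ≤ 1) (hab : a^2 ≤ η * b^2) {s : ℝ} (hs : 0 ≤ s) :
    2*(k:ℝ) ≤ (k:ℝ)*(1+η)*(1 + (s+b)/Real.sqrt ((s+b)^2 + a^2)) := by
  have hx : 0 < s + b := by linarith
  have hy : 0 < Real.sqrt ((s+b)^2 + a^2) := by positivity
  have hy2 : (Real.sqrt ((s+b)^2 + a^2))^2 = (s+b)^2 + a^2 :=
    Real.sq_sqrt (by positivity)
  have key : (1-η) * Real.sqrt ((s+b)^2 + a^2) ≤ (1+η) * (s+b) := by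
    rcases le_or_gt (1-η) 0 with h | h
    · nlinarith
    · have e1 : (1-η) * Real.sqrt ((s+b)^2 + a^2)
          = Real.sqrt ((1-η)^2 * ((s+b)^2+a^2)) := by
        rw [Real.sqrt_mul (sq_nonneg _), Real.sqrt_sq h.le]
      have e2 : Real.sqrt ((1-η)^2 * ((s+b)^2+a^2)) ≤ Real.sqrt (((1+η)*(s+b))^2) :=
        Real.sqrt_le_sqrt (by
          have hbx : b^2 ≤ (s+b)^2 := by nlinarith
          have d1 : (1-η)^2 ≤ 1 := by nlinarith
          have c1 : (1-η)^2*a^2 ≤ a^2 := by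
            have := mul_le_mul_of_nonneg_right d1 (sq_nonneg a); linarith
          have c2 : a^2 ≤ η*(s+b)^2 :=
            le_trans hab (mul_le_mul_of_nonneg_left hbx hη.le)
          nlinarith [mul_nonneg hη.le (sq_nonneg (s+b))])
      have e3 : Real.sqrt (((1+η)*(s+b))^2) = (1+η)*(s+b) :=
        Real.sqrt_sq (by positivity)
      rw [e1]; rw [e3] at e2; exact e2
  have h2 : 2 ≤ (1+η)*(1 + (s+b)/Real.sqrt ((s+b)^2 + a^2)) := by
    have hdiv : (1+η)*(1 + (s+b)/Real.sqrt ((s+b)^2 + a^2)) - 2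
        = ((1+η)*(s+b) - (1-η)*Real.sqrt ((s+b)^2+a^2)) / Real.sqrt ((s+b)^2+a^2) := by
      field_simp; ring
    have h5 : 0 ≤ (1+η)*(1 + (s+b)/Real.sqrt ((s+b)^2 + a^2)) - 2 := by
      rw [hdiv]; exact div_nonneg (by linarith) hy.le
    linarith
  have hk : (0:ℝ) ≤ (k:ℝ) := Nat.cast_nonneg k
  calc 2*(k:ℝ) = (k:ℝ)*2 := by ring
    _ ≤ (k:ℝ)*((1+η)*(1 + (s+b)/Real.sqrt ((s+b)^2 + a^2))) :=
        mul_le_mul_of_nonneg_left h2 hk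
    _ = (k:ℝ)*(1+η)*(1 + (s+b)/Real.sqrt ((s+b)^2 + a^2)) := by ring

lemma lsf_hasFDerivAt (p : E) (c R' d : ℝ) (hc : 0 < c) (x : E) :
    HasFDerivAt (fun y : E => R' - Real.sqrt (‖y - p‖^2 + c) - d)
      ((-(Real.sqrt (‖x - p‖^2 + c))⁻¹) • (innerSL ℝ (x - p))) x := by
  have hpos : (0:ℝ) < ‖x - p‖^2 + c := by positivity
  have h0 := (((hasFDerivAt_id x).sub_const p).norm_sq).add_const c
  have h2 := h0.sqrt hpos.ne'
  have h3 := ((hasFDerivAt_const R' x).sub h2).sub_const d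
  refine h3.congr_fderiv ?_
  have hs : Real.sqrt (‖x - p‖^2 + c) ≠ 0 := by positivity
  ext v
  simp [ContinuousLinearMap.smul_apply, smul_smul]
  field_simp

lemma lsf_hess (p : E) (c R' d : ℝ) (hc : 0 < c) (x v : E) :
    -(Real.sqrt (‖x - p‖^2 + c))⁻¹ * ‖v‖^2
    ≤ iteratedFDeriv ℝ 2 (fun y : E => R' - Real.sqrt (‖y - p‖^2 + c) - d) x ![v, v] := by
  have hpos : (0:ℝ) < ‖x - p‖^2 + c := by positivity
  have hs : (0:ℝ) < Real.sqrt (‖x - p‖^2 + c) := Real.sqrt_pos.2 hpos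
  have hf1 : fderiv ℝ (fun y : E => R' - Real.sqrt (‖y - p‖^2 + c) - d)
      = fun y : E => (-(Real.sqrt (‖y - p‖^2 + c))⁻¹) • (innerSL ℝ (y - p)) :=
    funext fun y => (lsf_hasFDerivAt p c R' d hc y).fderiv
  have h0 := (((hasFDerivAt_id x).sub_const p).norm_sq).add_const c
  have h2 := h0.sqrt hpos.ne'
  have hinv := (hasDerivAt_inv hs.ne').comp_hasFDerivAt x h2
  have hneg := hinv.neg
  have hw : HasFDerivAt (fun y : E => innerSL ℝ (y - p))
      ((innerSL ℝ : E →L[ℝ] E →L[ℝ] ℝ).comp (ContinuousLinearMap.id ℝ _)) x :=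
    (innerSL ℝ : E →L[ℝ] E →L[ℝ] ℝ).hasFDerivAt.comp x ((hasFDerivAt_id x).sub_const p)
  have hg := hneg.smul hw
  simp only [Function.comp_def, id_eq] at hg
  rw [iteratedFDeriv_two_apply, hf1, HasFDerivAt.fderiv (f := fun y : E => (-(Real.sqrt (‖y - p‖^2 + c))⁻¹) • (innerSL ℝ (y - p))) hg]
  simp only [Matrix.cons_val_zero, Matrix.cons_val_one, Matrix.head_cons,
    ContinuousLinearMap.add_apply, ContinuousLinearMap.smul_apply,
    ContinuousLinearMap.smulRight_apply, ContinuousLinearMap.comp_apply,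
    ContinuousLinearMap.coe_id', id_eq, innerSL_apply_apply, smul_eq_mul,
    ContinuousLinearMap.coe_smul', Pi.smul_apply, Pi.neg_apply, neg_mul, neg_neg,
    ContinuousLinearMap.neg_apply, nsmul_eq_mul, Nat.cast_ofNat]
  have hv : ⟪v, v⟫ = ‖v‖^2 := real_inner_self_eq_norm_sq v
  rw [hv]
  have e : (Real.sqrt (‖x-p‖^2+c)^2)⁻¹ * (1/(2*Real.sqrt (‖x-p‖^2+c)) * (2*⟪x-p,v⟫)) * ⟪x-p,v⟫
      = (Real.sqrt (‖x-p‖^2+c)^2 * Real.sqrt (‖x-p‖^2+c))⁻¹ * ⟪x-p,v⟫^2 := by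
    field_simp
  have hnn : (0:ℝ) ≤ (Real.sqrt (‖x-p‖^2+c)^2 * Real.sqrt (‖x-p‖^2+c))⁻¹ * ⟪x-p,v⟫^2 := by
    positivity
  linarith [e, hnn]

lemma lsf_F_ge (k : ℕ) (q : E) (A : E → E → ℝ) (C : ℝ) (hC : C ≤ 0)
    (hA : ∀ v : E, ‖v‖ = 1 → C ≤ A v v) :
    (k:ℝ) * C ≤ ambrosioSonerF k q A := by
  unfold ambrosioSonerF
  set S := {t : ℝ | ∃ b : Fin k → E,
    Orthonormal ℝ b ∧ (∀ i, ⟪b i, q⟫ = 0) ∧ t = ∑ i, A (b i) (b i)} with hS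
  rcases S.eq_empty_or_nonempty with h | h
  · rw [h, Real.sInf_empty]
    exact mul_nonpos_of_nonneg_of_nonpos (Nat.cast_nonneg k) hC
  · apply le_csInf h
    rintro tt ⟨b, hb, -, rfl⟩
    calc (k:ℝ) * C = ∑ _i : Fin k, C := by
          rw [Finset.sum_const, Finset.card_univ, Fintype.card_fin, nsmul_eq_mul]
      _ ≤ ∑ i, A (b i) (b i) :=
          Finset.sum_le_sum fun i _ => hA (b i) (hb.1 i)

lemma lsf_Flo_ge (k : ℕ) (A : E → E → ℝ) (C : ℝ) (hC : C ≤ 0)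
    (hA : ∀ v : E, ‖v‖ = 1 → C ≤ A v v) :
    (k:ℝ) * C ≤ ambrosioSonerFlo k A := by
  unfold ambrosioSonerFlo
  rcases Set.eq_empty_or_nonempty {t : ℝ | ∃ p : E, p ≠ 0 ∧ t = ambrosioSonerF k p A}
    with h | h
  · rw [h, Real.sInf_empty]
    exact mul_nonpos_of_nonneg_of_nonpos (Nat.cast_nonneg k) hC
  · apply le_csInf h
    rintro tt ⟨q, -, rfl⟩
    exact lsf_F_ge k q A C hC hA

lemma lsf_poly_bound (k : ℕ) {ρ t W : ℝ} (hρ0 : 0 < ρ) (hρ1 : ρ ≤ 1) (ht : 0 ≤ t)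
    (hW : W ≤ (t+ρ) + ρ^2) :
    (k:ℝ)*(1+ρ)*(t + ρ + W) + ρ^2 ≤ 2*(k:ℝ)*t + (2*(k:ℝ)*(t+3)+1)*ρ := by
  have hk0 : (0:ℝ) ≤ (k:ℝ) := Nat.cast_nonneg k
  have h1 : (k:ℝ)*(1+ρ)*(t+ρ+W) ≤ (k:ℝ)*(1+ρ)*(2*t+2*ρ+ρ^2) :=
    mul_le_mul_of_nonneg_left (by linarith) (by positivity)
  have hρsq : ρ^2 ≤ ρ := by nlinarith
  have hρcube : ρ^3 ≤ ρ := by nlinarith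
  nlinarith [mul_le_mul_of_nonneg_left hρsq hk0,
    mul_le_mul_of_nonneg_left hρcube hk0,
    mul_nonneg (mul_nonneg hk0 ht) hρ0.le]

end Aux

set_option maxHeartbeats 1600000 in
/-- Avoidance of shrinking balls by the Ambrosio–Soner level set flow: if `u` is the nonnegative
uniformly continuous viscosity solution of the `k`-dimensional level set equation with initial
datum `dist(·, X)` and `dist(p, X) = R`, then `R² > 2kt` implies `u(p,t) ≥ R - √(2kt)`. -/
theorem levelSetFlow_avoids_balls (n k : ℕ) (X : Set (EuclideanSpace ℝ (Fin n)))
    (hX : IsClosed X) (hXne : X.Nonempty)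
    (p : EuclideanSpace ℝ (Fin n)) (R : ℝ) (hR : Metric.infDist p X = R)
    (u : EuclideanSpace ℝ (Fin n) × ℝ → ℝ) (hu : UniformContinuous u) (hupos : ∀ z, 0 ≤ u z)
    (hinit : ∀ x, u (x, 0) = Metric.infDist x X)
    (hsol : IsViscositySolution k u {z : EuclideanSpace ℝ (Fin n) × ℝ | 0 < z.2})
    (t : ℝ) (ht : 0 ≤ t) (hRt : R ^ 2 > 2 * k * t) :
    u (p, t) ≥ R - Real.sqrt (2 * k * t) := by
  have hR0 : 0 ≤ R := hR ▸ Metric.infDist_nonneg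
  -- Key quantitative estimate for each small ρ
  have key : ∀ ρ : ℝ, ρ ∈ Ioc (0:ℝ) 1 →
      R - Real.sqrt (2*(k:ℝ)*t + (2*(k:ℝ)*(t+3)+1)*ρ) - ρ*t ≤ u (p, t) := by
    rintro ρ ⟨hρ0, hρ1⟩
    set m : ℝ → ℝ := lsfM k ρ ρ (ρ^2) ρ with hm
    have ha : (0:ℝ) < ρ^2 := by positivity
    have hmge : ∀ s, ρ^2 ≤ m s := fun s => lsfM_ge k hρ0.le s
    have hmpos : ∀ s, 0 < m s := fun s => lt_of_lt_of_le ha (hmge s)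
    set φ : EuclideanSpace ℝ (Fin n) × ℝ → ℝ :=
      fun z => R - Real.sqrt (‖z.1 - p‖^2 + m z.2) - ρ * z.2 with hφ
    have hinpos : ∀ z : EuclideanSpace ℝ (Fin n) × ℝ, 0 < ‖z.1 - p‖^2 + m z.2 :=
      fun z => by have := hmpos z.2; positivity
    have hφC : ContDiff ℝ 2 φ := by
      have hin : ContDiff ℝ 2
          (fun z : EuclideanSpace ℝ (Fin n) × ℝ => ‖z.1 - p‖^2 + m z.2) :=
        ((contDiff_fst.sub contDiff_const).norm_sq ℝ).add
          ((lsfM_contDiff k ha).comp contDiff_snd)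
      exact (contDiff_const.sub (hin.sqrt fun z => (hinpos z).ne')).sub
        (contDiff_const.mul contDiff_snd)
    -- main claim: u (p,t) ≥ φ (p,t)
    have main : φ (p, t) ≤ u (p, t) := by
      by_contra hlt
      push_neg at hlt
      set w : EuclideanSpace ℝ (Fin n) × ℝ → ℝ := fun z => u z - φ z with hw
      have hwcont : Continuous w := hu.continuous.sub hφC.continuous
      set S : Set (EuclideanSpace ℝ (Fin n) × ℝ) := {z | 0 ≤ z.2} with hS
      have hSclosed : IsClosed S := isClosed_le continuous_const continuous_snd
      have hptS : (p, t) ∈ S := ht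
      have hwpt : w (p, t) < 0 := sub_neg.2 hlt
      have hwlb : ∀ z : EuclideanSpace ℝ (Fin n) × ℝ, z ∈ S →
          ‖z.1 - p‖ - R ≤ w z ∧ ρ * z.2 - R ≤ w z := by
        intro z hz
        have hz2 : (0:ℝ) ≤ z.2 := hz
        have h1 : ‖z.1 - p‖ ≤ Real.sqrt (‖z.1 - p‖^2 + m z.2) := by
          have h2 := Real.sqrt_le_sqrt
            (le_add_of_nonneg_right (hmpos z.2).le :
              ‖z.1 - p‖^2 ≤ ‖z.1 - p‖^2 + m z.2)
          rwa [Real.sqrt_sq (norm_nonneg _)] at h2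
        have h3 : (0:ℝ) ≤ Real.sqrt (‖z.1 - p‖^2 + m z.2) := Real.sqrt_nonneg _
        have hu0 : 0 ≤ u z := hupos z
        have hwz : w z = u z - (R - Real.sqrt (‖z.1 - p‖^2 + m z.2) - ρ * z.2) := rfl
        constructor
        · rw [hwz]; nlinarith [mul_nonneg hρ0.le hz2]
        · rw [hwz]; nlinarith
      set K : Set (EuclideanSpace ℝ (Fin n) × ℝ) :=
        (closedBall p (R+1)) ×ˢ (Icc (0:ℝ) ((R+1)/ρ)) with hK
      have hKcomp : IsCompact K := (isCompact_closedBall p (R+1)).prod isCompact_Icc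
      have claim : ∀ z : EuclideanSpace ℝ (Fin n) × ℝ, z ∈ S → z ∉ K →
          w (p, t) ≤ w z := by
        intro z hz hzK
        have hz2 : (0:ℝ) ≤ z.2 := hz
        by_cases hball : z.1 ∈ closedBall p (R+1)
        · have hIcc : z.2 ∉ Icc (0:ℝ) ((R+1)/ρ) := fun hi => hzK ⟨hball, hi⟩
          have hgt : (R+1)/ρ < z.2 := by
            by_contra hle
            push_neg at hle
            exact hIcc ⟨hz2, hle⟩
          have : R + 1 < ρ * z.2 := by
            rw [div_lt_iff₀ hρ0] at hgt; linarith [hgt]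
          linarith [(hwlb z hz).2, hwpt]
        · have : R + 1 < ‖z.1 - p‖ := by
            have := hball
            rw [mem_closedBall, dist_eq_norm] at this
            push_neg at this
            linarith
          linarith [(hwlb z hz).1, hwpt]
      obtain ⟨z₀, hz₀S, hz₀min⟩ :=
        hwcont.continuousOn.exists_isMinOn' hSclosed hptS
          (by
            rw [Filter.eventually_inf_principal]
            exact Filter.eventually_iff.2
              (Filter.mem_cocompact.2
                ⟨K, hKcomp, fun z hzK hzS => claim z hzS hzK⟩))
      obtain ⟨x₀, s₀⟩ := z₀
      have hminval : w (x₀, s₀) ≤ w (p, t) := isMinOn_iff.1 hz₀min (p, t) hptS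
      have hwz₀ : w (x₀, s₀) < 0 := lt_of_le_of_lt hminval hwpt
      have hs₀ : (0:ℝ) ≤ s₀ := hz₀S
      rcases eq_or_lt_of_le hs₀ with h0 | h0
      · -- minimum at time zero : contradiction with initial condition
        have hinit0 : u (x₀, 0) = Metric.infDist x₀ X := hinit x₀
        have hRle : R ≤ Metric.infDist x₀ X + ‖x₀ - p‖ := by
          have h4 := Metric.infDist_le_infDist_add_dist (x := p) (y := x₀) (s := X)
          rw [hR, dist_comm, dist_eq_norm] at h4
          exact h4
        have hsq : ‖x₀ - p‖ ≤ Real.sqrt (‖x₀ - p‖^2 + m 0) := by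
          have h2 := Real.sqrt_le_sqrt
            (le_add_of_nonneg_right (hmpos 0).le :
              ‖x₀ - p‖^2 ≤ ‖x₀ - p‖^2 + m 0)
          rwa [Real.sqrt_sq (norm_nonneg _)] at h2
        have hwz : w (x₀, s₀) = u (x₀, s₀)
            - (R - Real.sqrt (‖x₀ - p‖^2 + m s₀) - ρ * s₀) := rfl
        rw [← h0] at hwz
        rw [← h0] at hwz₀
        rw [hwz, hinit0] at hwz₀
        simp only [mul_zero] at hwz₀
        linarith
      · -- interior minimum : contradiction with the supersolution property
        have hz₀Ω : ((x₀, s₀) : EuclideanSpace ℝ (Fin n) × ℝ)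
            ∈ {z : EuclideanSpace ℝ (Fin n) × ℝ | 0 < z.2} := h0
        have hsub : {z : EuclideanSpace ℝ (Fin n) × ℝ | 0 < z.2} ⊆ S :=
          fun z hz => show (0:ℝ) ≤ z.2 from le_of_lt hz
        have hloc : IsLocalMinOn (fun z => u z - φ z)
            {z : EuclideanSpace ℝ (Fin n) × ℝ | 0 < z.2} (x₀, s₀) :=
          Filter.eventually_of_mem self_mem_nhdsWithin
            (fun z hz => isMinOn_iff.1 hz₀min z (hsub hz))
        obtain ⟨hbr1, hbr2⟩ := hsol.2 φ hφC (x₀, s₀) hz₀Ω hloc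
        have hc₀ : 0 < m s₀ := hmpos s₀
        have hSqpos : 0 < Real.sqrt (‖x₀ - p‖^2 + m s₀) :=
          Real.sqrt_pos.2 (by have := hc₀; positivity)
        have hC : -(Real.sqrt (‖x₀ - p‖^2 + m s₀))⁻¹ ≤ 0 :=
          neg_nonpos.2 (inv_nonneg.2 (Real.sqrt_nonneg _))
        have hA : ∀ v : EuclideanSpace ℝ (Fin n), ‖v‖ = 1 →
            -(Real.sqrt (‖x₀ - p‖^2 + m s₀))⁻¹ ≤ spatialHess φ (x₀, s₀) v v := by
          intro v hv
          have h5 := lsf_hess p (m s₀) R (ρ * s₀) hc₀ x₀ v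
          rw [hv] at h5
          have h6 : spatialHess φ (x₀, s₀) v v = iteratedFDeriv ℝ 2
              (fun y : EuclideanSpace ℝ (Fin n) =>
                R - Real.sqrt (‖y - p‖^2 + m s₀) - ρ * s₀) x₀ ![v, v] := rfl
          rw [h6]
          simpa using h5
        -- the F-bound in both branches
        have htd2 : (k:ℝ) * (-(Real.sqrt (‖x₀ - p‖^2 + m s₀))⁻¹)
            ≤ timeDeriv φ (x₀, s₀) := by
          by_cases hg : spatialGrad φ (x₀, s₀) = 0
          · exact le_trans (lsf_Flo_ge k _ _ hC hA) (hbr2 hg)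
          · exact le_trans (lsf_F_ge k _ _ _ hC hA) (hbr1 hg)
        -- compute the time derivative
        have hqm : HasDerivAt (fun s => ‖x₀ - p‖^2 + m s)
            ((k:ℝ)*(1+ρ)*(1 + (s₀+ρ)/Real.sqrt ((s₀+ρ)^2 + (ρ^2)^2))) s₀ :=
          (lsfM_hasDerivAt k ha s₀).const_add (‖x₀ - p‖^2)
        have hqmne : ‖x₀ - p‖^2 + m s₀ ≠ 0 := (by positivity : (0:ℝ) < _).ne'
        have h2 := hqm.sqrt hqmne
        have hder := ((hasDerivAt_const s₀ R).sub h2).sub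
          ((hasDerivAt_id s₀).const_mul ρ)
        simp only [id_eq] at hder
        have hTD : timeDeriv φ (x₀, s₀)
            = 0 - ((k:ℝ)*(1+ρ)*(1 + (s₀+ρ)/Real.sqrt ((s₀+ρ)^2 + (ρ^2)^2)))
                / (2 * Real.sqrt (‖x₀ - p‖^2 + m s₀)) - ρ * 1 := by
          have : timeDeriv φ (x₀, s₀)
              = deriv (fun s => R - Real.sqrt (‖x₀ - p‖^2 + m s) - ρ * s) s₀ := rfl
          rw [this, HasDerivAt.deriv (f := fun s => R - Real.sqrt (‖x₀ - p‖^2 + m s) - ρ * s) hder]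
        have hM : 2*(k:ℝ) ≤ (k:ℝ)*(1+ρ)*(1 + (s₀+ρ)/Real.sqrt ((s₀+ρ)^2 + (ρ^2)^2)) :=
          lsfM_deriv_ge k ha hρ0 hρ0 hρ1 (by nlinarith) hs₀
        have e2 : (k:ℝ) * (-(Real.sqrt (‖x₀ - p‖^2 + m s₀))⁻¹)
            = -((k:ℝ)/Real.sqrt (‖x₀ - p‖^2 + m s₀)) := by
          rw [div_eq_mul_inv]; ring
        have e3 : (k:ℝ)/Real.sqrt (‖x₀ - p‖^2 + m s₀)
            ≤ ((k:ℝ)*(1+ρ)*(1 + (s₀+ρ)/Real.sqrt ((s₀+ρ)^2 + (ρ^2)^2)))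
              / (2 * Real.sqrt (‖x₀ - p‖^2 + m s₀)) := by
          rw [div_le_div_iff₀ hSqpos (by positivity)]
          nlinarith [hSqpos]
        rw [hTD, e2] at htd2
        linarith
    -- conclude the key estimate from `main`
    have hφpt : φ (p, t) = R - Real.sqrt (m t) - ρ * t := by
      show R - Real.sqrt (‖p - p‖^2 + m t) - ρ * t = _
      rw [sub_self, norm_zero, show (0:ℝ)^2 + m t = m t by ring]
    have hmt : m t ≤ 2*(k:ℝ)*t + (2*(k:ℝ)*(t+3)+1)*ρ := by
      have hsq2 : Real.sqrt ((t+ρ)^2 + (ρ^2)^2) ≤ (t+ρ) + ρ^2 := by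
        have h7 : (t+ρ)^2 + (ρ^2)^2 ≤ ((t+ρ) + ρ^2)^2 := by nlinarith
        have h8 := Real.sqrt_le_sqrt h7
        rwa [Real.sqrt_sq (by positivity : (0:ℝ) ≤ (t+ρ) + ρ^2)] at h8
      have hmt0 : m t = (k:ℝ)*(1+ρ)*(t + ρ + Real.sqrt ((t+ρ)^2 + (ρ^2)^2)) + ρ^2 := rfl
      rw [hmt0]
      exact lsf_poly_bound k hρ0 hρ1 ht hsq2
    have hsqm : Real.sqrt (m t) ≤ Real.sqrt (2*(k:ℝ)*t + (2*(k:ℝ)*(t+3)+1)*ρ) :=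
      Real.sqrt_le_sqrt hmt
    rw [hφpt] at main
    linarith
  -- pass to the limit ρ → 0⁺
  have hne : Filter.NeBot (nhdsWithin (0:ℝ) (Ioc (0:ℝ) 1)) := by
    refine mem_closure_iff_nhdsWithin_neBot.1 ?_
    rw [closure_Ioc (one_ne_zero).symm]
    exact ⟨le_refl 0, zero_le_one⟩
  have hcont : Continuous (fun ρ : ℝ =>
      R - Real.sqrt (2*(k:ℝ)*t + (2*(k:ℝ)*(t+3)+1)*ρ) - ρ*t) := by
    have : Continuous (fun ρ : ℝ => 2*(k:ℝ)*t + (2*(k:ℝ)*(t+3)+1)*ρ) := by continuity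
    exact (continuous_const.sub (Real.continuous_sqrt.comp this)).sub
      (continuous_id.mul continuous_const)
  have hlim : Filter.Tendsto (fun ρ : ℝ =>
      R - Real.sqrt (2*(k:ℝ)*t + (2*(k:ℝ)*(t+3)+1)*ρ) - ρ*t)
      (nhdsWithin (0:ℝ) (Ioc (0:ℝ) 1)) (nhds (R - Real.sqrt (2*(k:ℝ)*t))) := by
    have h9 := (hcont.tendsto 0).mono_left (nhdsWithin_le_nhds (s := Ioc (0:ℝ) 1))
    simpa only [mul_zero, zero_mul, add_zero, sub_zero] using h9
  have hfinal := le_of_tendsto hlim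
    (Filter.eventually_of_mem self_mem_nhdsWithin (fun ρ hρ => key ρ hρ))
  exact hfinal
end

section
/- Let X ⊂ ℝ^n be a k-dimensional (δ,R) Reifenberg flat set with δ < 1/100. Then for every x₁, x₂ ∈ X with d(x₁,x₂) < r < R/10, the k-planes P₁ = P_{x₁,10r} − x₁ and P₂ = P_{x₂,10r} − x₂ (translated to the origin) satisfy: every unit vector v ∈ P₁ is within distance C·δ of P₂, for a universal constant C (e.g. C = 40). -/
open Metric Set

/-- Tilt control between approximating planes of a Reifenberg flat set: if `X` is
`k`-dimensional `(δ,R)` Reifenberg flat (with the approximating `k`-plane through `x` at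
scale `r` having direction `P x r`), `δ < 1/100`, `x₁, x₂ ∈ X` with `d(x₁,x₂) < r < R/10`,
then every unit vector in the direction `P x₁ (10r)` is within distance `40·δ` of
`P x₂ (10r)`. -/
theorem reifenberg_tilt_control (n k : ℕ) (δ R : ℝ) (hδ : 0 < δ) (hδ' : δ < 1 / 100)
    (hR : 0 < R) (X : Set (EuclideanSpace ℝ (Fin n))) (hXc : IsCompact X)
    (P : EuclideanSpace ℝ (Fin n) → ℝ → Submodule ℝ (EuclideanSpace ℝ (Fin n)))
    (hP : ∀ x ∈ X, ∀ r : ℝ, 0 < r → r < R → Module.finrank ℝ (P x r) = k ∧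
      Metric.hausdorffDist (Metric.ball x r ∩ {y | y - x ∈ P x r})
        (Metric.ball x r ∩ X) ≤ δ * r)
    (x₁ x₂ : EuclideanSpace ℝ (Fin n)) (hx₁ : x₁ ∈ X) (hx₂ : x₂ ∈ X)
    (r : ℝ) (hr : 0 < r) (hrR : r < R / 10) (hd : dist x₁ x₂ < r) :
    ∀ v ∈ P x₁ (10 * r), ‖v‖ = 1 →
      Metric.infDist v (P x₂ (10 * r) : Set (EuclideanSpace ℝ (Fin n))) ≤ 40 * δ := by
  intro v hv hv1
  have h10r : (0:ℝ) < 10 * r := by linarith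
  have h10rR : 10 * r < R := by linarith
  obtain ⟨-, h1⟩ := hP x₁ hx₁ (10 * r) h10r h10rR
  obtain ⟨-, h2⟩ := hP x₂ hx₂ (10 * r) h10r h10rR
  set S₁ := ball x₁ (10 * r) ∩ {y | y - x₁ ∈ P x₁ (10 * r)} with hS₁
  set T₁ := ball x₁ (10 * r) ∩ X with hT₁
  set S₂ := ball x₂ (10 * r) ∩ {y | y - x₂ ∈ P x₂ (10 * r)} with hS₂
  set T₂ := ball x₂ (10 * r) ∩ X with hT₂
  have hS₁ne : S₁.Nonempty := ⟨x₁, mem_ball_self h10r, by simp⟩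
  have hT₁ne : T₁.Nonempty := ⟨x₁, mem_ball_self h10r, hx₁⟩
  have hS₂ne : S₂.Nonempty := ⟨x₂, mem_ball_self h10r, by simp⟩
  have hT₂ne : T₂.Nonempty := ⟨x₂, mem_ball_self h10r, hx₂⟩
  have hE1 : EMetric.hausdorffEdist S₁ T₁ ≠ ⊤ :=
    Metric.hausdorffEdist_ne_top_of_nonempty_of_bounded hS₁ne hT₁ne
      (isBounded_ball.subset inter_subset_left) (isBounded_ball.subset inter_subset_left)
  have hE2 : EMetric.hausdorffEdist S₂ T₂ ≠ ⊤ :=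
    Metric.hausdorffEdist_ne_top_of_nonempty_of_bounded hS₂ne hT₂ne
      (isBounded_ball.subset inter_subset_left) (isBounded_ball.subset inter_subset_left)
  -- the point on P₁
  set p : EuclideanSpace ℝ (Fin n) := x₁ + (8 * r) • v with hp
  have hpx₁ : dist p x₁ = 8 * r := by
    simp only [hp, dist_eq_norm, add_sub_cancel_left, norm_smul, hv1]
    rw [Real.norm_eq_abs, abs_of_pos (by linarith)]
    ring
  have hpS₁ : p ∈ S₁ := by
    refine ⟨by rw [mem_ball, hpx₁]; linarith, ?_⟩
    simp only [mem_setOf_eq, hp, add_sub_cancel_left]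
    exact (P x₁ (10 * r)).smul_mem _ hv
  -- find y ∈ X close to p
  have hpy : Metric.infDist p T₁ < 11 * δ * r := by
    calc Metric.infDist p T₁ ≤ Metric.hausdorffDist S₁ T₁ :=
          Metric.infDist_le_hausdorffDist_of_mem hpS₁ hE1
      _ ≤ δ * (10 * r) := h1
      _ < 11 * δ * r := by nlinarith
  obtain ⟨y, ⟨-, hyX⟩, hyd⟩ := (Metric.infDist_lt_iff hT₁ne).mp hpy
  -- y is in ball x₂ (10r)
  have hyT₂ : y ∈ T₂ := by
    refine ⟨mem_ball.mpr ?_, hyX⟩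
    have : dist y x₂ ≤ dist y p + dist p x₁ + dist x₁ x₂ := by
      calc dist y x₂ ≤ dist y p + dist p x₂ := dist_triangle _ _ _
        _ ≤ dist y p + (dist p x₁ + dist x₁ x₂) := by
            linarith [dist_triangle p x₁ x₂]
        _ = _ := by ring
    rw [dist_comm y p] at this
    rw [hpx₁] at this
    nlinarith
  -- find z ∈ plane P₂ close to y
  have hyz : Metric.infDist y S₂ < 11 * δ * r := by
    calc Metric.infDist y S₂ ≤ Metric.hausdorffDist T₂ S₂ :=
          Metric.infDist_le_hausdorffDist_of_mem hyT₂ (by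
            rw [Metric.hausdorffEDist_comm]; exact hE2)
      _ = Metric.hausdorffDist S₂ T₂ := Metric.hausdorffDist_comm
      _ ≤ δ * (10 * r) := h2
      _ < 11 * δ * r := by nlinarith
  obtain ⟨z, ⟨-, hzP⟩, hzd⟩ := (Metric.infDist_lt_iff hS₂ne).mp hyz
  -- x₁ ∈ T₂, find z₀ ∈ plane P₂ close to x₁
  have hx₁T₂ : x₁ ∈ T₂ := ⟨mem_ball.mpr (by linarith), hx₁⟩
  have hx₁z₀ : Metric.infDist x₁ S₂ < 11 * δ * r := by
    calc Metric.infDist x₁ S₂ ≤ Metric.hausdorffDist T₂ S₂ :=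
          Metric.infDist_le_hausdorffDist_of_mem hx₁T₂ (by
            rw [Metric.hausdorffEDist_comm]; exact hE2)
      _ = Metric.hausdorffDist S₂ T₂ := Metric.hausdorffDist_comm
      _ ≤ δ * (10 * r) := h2
      _ < 11 * δ * r := by nlinarith
  obtain ⟨z₀, ⟨-, hz₀P⟩, hz₀d⟩ := (Metric.infDist_lt_iff hS₂ne).mp hx₁z₀
  -- candidate w in P₂
  set w : EuclideanSpace ℝ (Fin n) := (1 / (8 * r)) • (z - z₀) with hw
  have hwP : w ∈ P x₂ (10 * r) := by
    have : z - z₀ ∈ P x₂ (10 * r) := by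
      have := (P x₂ (10 * r)).sub_mem hzP hz₀P
      simpa using this
    exact (P x₂ (10 * r)).smul_mem _ this
  have h8r : (8 * r) ≠ 0 := by positivity
  have key : dist v w ≤ 33 * δ / 8 := by
    have hv' : v = (1 / (8 * r)) • (p - x₁) := by
      rw [hp, add_sub_cancel_left, smul_smul]
      rw [one_div_mul_cancel h8r, one_smul]
    rw [hv', hw, dist_eq_norm, ← smul_sub, norm_smul]
    have hnorm : ‖p - x₁ - (z - z₀)‖ ≤ 33 * δ * r := by
      have h1' : ‖p - z‖ ≤ 22 * δ * r := by
        calc ‖p - z‖ = dist p z := (dist_eq_norm _ _).symm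
          _ ≤ dist p y + dist y z := dist_triangle _ _ _
          _ ≤ 11 * δ * r + 11 * δ * r := by linarith
          _ = 22 * δ * r := by ring
      have h2' : ‖z₀ - x₁‖ ≤ 11 * δ * r := by
        rw [← dist_eq_norm, dist_comm]
        linarith
      have heq : p - x₁ - (z - z₀) = (p - z) + (z₀ - x₁) := by abel
      calc ‖p - x₁ - (z - z₀)‖ = ‖(p - z) + (z₀ - x₁)‖ := by rw [heq]
        _ ≤ ‖p - z‖ + ‖z₀ - x₁‖ := norm_add_le _ _
        _ ≤ 33 * δ * r := by linarith
    rw [Real.norm_eq_abs, abs_of_pos (by positivity)]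
    rw [div_mul_eq_mul_div, one_mul, div_le_iff₀ (by positivity)]
    calc ‖p - x₁ - (z - z₀)‖ ≤ 33 * δ * r := hnorm
      _ = 33 * δ / 8 * (8 * r) := by ring
  calc Metric.infDist v (P x₂ (10 * r) : Set (EuclideanSpace ℝ (Fin n))) ≤ dist v w :=
        Metric.infDist_le_dist_of_mem hwP
    _ ≤ 33 * δ / 8 := key
    _ ≤ 40 * δ := by linarith
end
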